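/- For all R, R_d ∈ SO(3), the attitude error vector and attitude error function satisfy the exact identity ‖e_R‖^2 = Ψ(R, R_d) (2 − Ψ(R, R_d)). -/

import Mathlib

open Real Matrix

def SO3 (Q : Matrix (Fin 3) (Fin 3) ℝ) : Prop :=
  Qᵀ * Q = 1 ∧ Q.det = 1

noncomputable def Psi (R Rd : Matrix (Fin 3) (Fin 3) ℝ) : ℝ :=
  (1 / 2 : ℝ) * (1 - Rdᵀ * R).trace

noncomputable def errVec (R Rd : Matrix (Fin 3) (Fin 3) ℝ) : EuclideanSpace ℝ (Fin 3) :=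
  (1 / 2 : ℝ) • (WithLp.toLp 2 ![(Rdᵀ * R - Rᵀ * Rd) 2 1, (Rdᵀ * R - Rᵀ * Rd) 0 2,
    (Rdᵀ * R - Rᵀ * Rd) 1 0] : EuclideanSpace ℝ (Fin 3))

/-- For all `R, R_d ∈ SO(3)`, the exact identity `‖e_R‖² = Ψ(R, R_d)(2 − Ψ(R, R_d))`. -/
theorem errVec_norm_sq_eq_psi (R Rd : Matrix (Fin 3) (Fin 3) ℝ)
    (hR : SO3 R) (hRd : SO3 Rd) :
    ‖errVec R Rd‖ ^ 2 = Psi R Rd * (2 - Psi R Rd) := by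
  obtain ⟨hR1, hR2⟩ := hR
  obtain ⟨hRd1, hRd2⟩ := hRd
  have hRdRd : Rd * Rdᵀ = 1 := mul_eq_one_comm.mp hRd1
  have hQt : Rᵀ * Rd = (Rdᵀ * R)ᵀ := by rw [Matrix.transpose_mul, Matrix.transpose_transpose]
  set Q := Rdᵀ * R with hQdef
  have hQ1 : Qᵀ * Q = 1 := by
    rw [hQdef, Matrix.transpose_mul, Matrix.transpose_transpose,
      Matrix.mul_assoc, ← Matrix.mul_assoc Rd, hRdRd, Matrix.one_mul, hR1]
  have hQdet : Q.det = 1 := by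
    rw [hQdef, Matrix.det_mul, Matrix.det_transpose, hR2, hRd2, mul_one]
  have hQQt : Q * Qᵀ = 1 := mul_eq_one_comm.mp hQ1
  have hadj : Q.adjugate = Qᵀ := by
    have := congrArg (fun M => M * Qᵀ) (Matrix.adjugate_mul Q)
    simpa [Matrix.mul_assoc, hQQt, hQdet] using this
  have ha0 := congrFun (congrFun hadj 0) 0
  have ha1 := congrFun (congrFun hadj 1) 1
  have ha2 := congrFun (congrFun hadj 2) 2
  simp [Matrix.adjugate_fin_three, Matrix.transpose_apply] at ha0 ha1 ha2
  have hc0 := congrFun (congrFun hQ1 0) 0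
  have hc1 := congrFun (congrFun hQ1 1) 1
  have hc2 := congrFun (congrFun hQ1 2) 2
  simp [Matrix.mul_apply, Fin.sum_univ_three, Matrix.transpose_apply, Matrix.one_apply] at hc0 hc1 hc2
  have hnorm : ‖errVec R Rd‖ ^ 2 =
      ((1/2 : ℝ) * (Q 2 1 - Q 1 2)) ^ 2 + ((1/2 : ℝ) * (Q 0 2 - Q 2 0)) ^ 2 +
      ((1/2 : ℝ) * (Q 1 0 - Q 0 1)) ^ 2 := by
    rw [EuclideanSpace.norm_eq]
    rw [Real.sq_sqrt (by positivity)]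
    simp [errVec, hQt, Fin.sum_univ_three, Matrix.sub_apply, Matrix.transpose_apply, Real.norm_eq_abs]
    simp only [mul_pow, sq_abs]
    rfl

  rw [hnorm]
  simp only [Psi, Matrix.trace_sub, Matrix.trace_one, Matrix.trace_fin_three, ← hQdef]
  simp only [Fintype.card_fin, Nat.cast_ofNat]
  linear_combination (hc0 + hc1 + hc2) / 4 + (ha0 + ha1 + ha2) / 2
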